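/- arXiv:math/9811160 — 5 statements merged into one kernel-verified Lean document; each statement's English description precedes it below -/
import Mathlib

section
/- If A is a bounded linear operator on a complex Banach space X whose spectrum is contained in the open left half-plane {λ : Re λ < 0}, then there exist constants M ≥ 1 and β > 0 such that ‖exp(tA)‖ ≤ M·exp(−βt) for all t ≥ 0. -/
open NormedSpace Filter Topology Finset Polynomial
open scoped Nat ENNReal

/-!
Let `s = max Re σ(a) < 0`. Approximating `exp a` by its Taylor polynomials `p_N(a)`, the
polynomial spectral mapping theorem bounds `r(p_N(a))` by `e^s` plus the Taylor tail, and the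
perturbation bound `r(x + y) ≤ r(x) + ‖y‖` for commuting `x, y` transfers this to
`r(exp a) ≤ e^s`. Gelfand's formula then gives `‖(exp a)^n‖ ≤ C e^{sn/2}`, and writing
`t = n + r` with `0 ≤ r < 1` turns this into `‖exp(ta)‖ ≤ C e^{‖a‖ - s/2} e^{st/2}`.
-/

theorem PowerSeries.aeval_trunc_exp {A : Type*} [Ring A] [Algebra ℂ A] (a : A) (N : ℕ) :
    Polynomial.aeval a (trunc N (exp ℂ)) = ∑ k ∈ range N, (k ! : ℂ)⁻¹ • a ^ k := by
  rw [Polynomial.aeval_def, eval₂_trunc_eq_sum_range]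
  refine sum_congr rfl fun k _ => ?_
  rw [coeff_exp, Algebra.smul_def]
  simp

section GelfandFormula

variable {A : Type*} [NormedRing A] [NormedAlgebra ℂ A] [CompleteSpace A]

theorem exists_norm_pow_le_of_spectralRadius_lt {a : A} {ρ : ℝ}
    (h : spectralRadius ℂ a < ENNReal.ofReal ρ) : ∃ C : ℝ, ∀ n : ℕ, ‖a ^ n‖ ≤ C * ρ ^ n := by
  have hρ : 0 < ρ := ENNReal.ofReal_pos.mp (h.trans_le' bot_le)
  have hev : ∀ᶠ n : ℕ in atTop, ‖a ^ n‖ ≤ ρ ^ n := by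
    have hgelfand := spectrum.pow_norm_pow_one_div_tendsto_nhds_spectralRadius a
    filter_upwards [hgelfand.eventually_lt_const h, eventually_ge_atTop 1] with n hn hn1
    have hn0 : (0 : ℝ) < n := by exact_mod_cast hn1
    rw [ENNReal.ofReal_lt_ofReal_iff hρ, one_div,
      Real.rpow_inv_lt_iff_of_pos (norm_nonneg _) hρ.le hn0, Real.rpow_natCast] at hn
    exact hn.le
  have hO : (fun n : ℕ => a ^ n) =O[atTop] fun n : ℕ => ρ ^ n :=
    Asymptotics.IsBigO.of_bound 1 <| hev.mono fun n hn => by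
      rwa [one_mul, Real.norm_of_nonneg (by positivity)]
  obtain ⟨C, hC⟩ := (Asymptotics.isBigO_nat_atTop_iff fun n h => absurd h (by positivity)).mp hO
  exact ⟨C, fun n => (hC n).trans_eq (by rw [Real.norm_of_nonneg (by positivity)])⟩

theorem spectralRadius_le_of_norm_pow_le {a : A} {C ρ : ℝ} (hρ : 0 ≤ ρ)
    (h : ∀ n : ℕ, ‖a ^ n‖ ≤ C * ρ ^ n) : spectralRadius ℂ a ≤ ENNReal.ofReal ρ := by
  set C' := max C 1
  have hC' : 0 < C' := lt_max_of_lt_right one_pos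
  have hlim : Tendsto (fun n : ℕ => ENNReal.ofReal (C' ^ (1 / n : ℝ) * ρ)) atTop
      (𝓝 (ENNReal.ofReal ρ)) := by
    have := ((Real.continuousAt_const_rpow hC'.ne').tendsto.comp
      (tendsto_one_div_atTop_nhds_zero_nat (𝕜 := ℝ))).mul_const ρ
    rw [Real.rpow_zero, one_mul] at this
    exact (ENNReal.continuous_ofReal.tendsto ρ).comp this
  refine le_of_tendsto_of_tendsto (spectrum.pow_norm_pow_one_div_tendsto_nhds_spectralRadius a)
    hlim ?_
  filter_upwards [eventually_ne_atTop 0] with n hn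
  refine ENNReal.ofReal_le_ofReal ?_
  calc ‖a ^ n‖ ^ (1 / n : ℝ) ≤ (C' * ρ ^ n) ^ (1 / n : ℝ) := by
        gcongr
        exact (h n).trans (by gcongr; exact le_max_left C 1)
    _ = C' ^ (1 / n : ℝ) * ρ := by
        rw [Real.mul_rpow hC'.le (by positivity), one_div, Real.pow_rpow_inv_natCast hρ hn]

end GelfandFormula

section NormOneClass

variable {A : Type*} [NormedRing A] [NormOneClass A]

theorem Commute.norm_add_pow_le {a b : A} (hab : Commute a b) {C ρ : ℝ}
    (ha : ∀ n : ℕ, ‖a ^ n‖ ≤ C * ρ ^ n) (n : ℕ) : ‖(a + b) ^ n‖ ≤ C * (ρ + ‖b‖) ^ n := by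
  calc ‖(a + b) ^ n‖
      ≤ ∑ m ∈ antidiagonal n, n.choose m.1 • (C * ρ ^ m.1 * ‖b‖ ^ m.2) := by
        rw [hab.add_pow']
        refine norm_sum_le_of_le _ fun m _ => norm_nsmul_le.trans ?_
        rw [nsmul_eq_mul]
        gcongr
        exact (norm_mul_le _ _).trans <| mul_le_mul (ha _) (norm_pow_le _ _) (norm_nonneg _)
          ((norm_nonneg _).trans (ha _))
    _ = C * (ρ + ‖b‖) ^ n := by
        rw [(Commute.all _ _).add_pow', mul_sum]
        exact sum_congr rfl fun m _ => by simp only [nsmul_eq_mul]; ring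

variable [NormedAlgebra ℂ A] [CompleteSpace A]

theorem Commute.spectralRadius_add_le {a b : A} (hab : Commute a b) :
    spectralRadius ℂ (a + b) ≤ spectralRadius ℂ a + ‖b‖₊ := by
  refine ENNReal.le_of_forall_pos_le_add fun ε hε hfin => ?_
  have hfin' : spectralRadius ℂ a ≠ ∞ := (le_self_add.trans_lt hfin).ne
  have hρ : ENNReal.ofReal ((spectralRadius ℂ a).toReal + ε) = spectralRadius ℂ a + ε := by
    rw [ENNReal.ofReal_add ENNReal.toReal_nonneg ε.coe_nonneg, ENNReal.ofReal_toReal hfin',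
      ENNReal.ofReal_coe_nnreal]
  obtain ⟨C, hC⟩ := exists_norm_pow_le_of_spectralRadius_lt
    (hρ ▸ ENNReal.lt_add_right hfin' (by exact_mod_cast hε.ne'))
  calc spectralRadius ℂ (a + b) ≤ ENNReal.ofReal ((spectralRadius ℂ a).toReal + ε + ‖b‖) :=
        spectralRadius_le_of_norm_pow_le (by positivity) (hab.norm_add_pow_le hC)
    _ = spectralRadius ℂ a + ‖b‖₊ + ε := by
        rw [ENNReal.ofReal_add (by positivity) (norm_nonneg _), hρ, ofReal_norm,
          enorm_eq_nnnorm, add_right_comm]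

theorem norm_exp_sub_aeval_trunc_exp_le (x : A) {R : ℝ} (hx : ‖x‖ ≤ R) (N : ℕ) :
    ‖exp x - aeval x (PowerSeries.trunc N (PowerSeries.exp ℂ))‖
      ≤ ∑' k : ℕ, R ^ (k + N) / (k + N)! := by
  set f : ℕ → A := fun k => (k ! : ℂ)⁻¹ • x ^ k
  have hf : Summable fun k => ‖f k‖ := norm_expSeries_summable' x
  have hfN : Summable fun k => ‖f (k + N)‖ := (summable_nat_add_iff N).mpr hf
  have hR : Summable fun k : ℕ => R ^ (k + N) / (k + N)! :=
    (summable_nat_add_iff (f := fun k : ℕ => R ^ k / k !) N).mpr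
      (Real.summable_pow_div_factorial R)
  have htail : exp x - aeval x (PowerSeries.trunc N (PowerSeries.exp ℂ)) = ∑' k, f (k + N) := by
    rw [PowerSeries.aeval_trunc_exp, congrFun (exp_eq_tsum ℂ) x,
      ← hf.of_norm.sum_add_tsum_nat_add N, add_sub_cancel_left]
  rw [htail]
  refine (norm_tsum_le_tsum_norm hfN).trans (Summable.tsum_le_tsum (fun k => ?_) hfN hR)
  rw [norm_smul, norm_inv, Complex.norm_natCast, inv_mul_eq_div]
  gcongr
  exact (norm_pow_le x _).trans (pow_le_pow_left₀ (norm_nonneg x) hx _)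

theorem norm_exp_le_exp_norm (x : A) : ‖exp x‖ ≤ Real.exp ‖x‖ := by
  simpa [Real.exp_eq_exp_ℝ, exp_eq_tsum_div] using norm_exp_sub_aeval_trunc_exp_le x le_rfl 0

theorem spectralRadius_exp_le_of_forall_re_le {a : A} {s : ℝ}
    (h : ∀ z ∈ spectrum ℂ a, z.re ≤ s) :
    spectralRadius ℂ (exp a) ≤ ENNReal.ofReal (Real.exp s) := by
  set T : ℕ → ℝ := fun N => ∑' k : ℕ, ‖a‖ ^ (k + N) / (k + N)!
  have hT0 : ∀ N, 0 ≤ T N := fun N => tsum_nonneg fun k => by positivity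
  have hT : Tendsto (fun N => ENNReal.ofReal (Real.exp s + 2 * T N)) atTop
      (𝓝 (ENNReal.ofReal (Real.exp s))) := by
    have := ((tendsto_sum_nat_add fun k => ‖a‖ ^ k / (k ! : ℝ)).const_mul 2).const_add
      (Real.exp s)
    rw [mul_zero, add_zero] at this
    exact (ENNReal.continuous_ofReal.tendsto _).comp this
  have : Nontrivial A := NormOneClass.nontrivial
  refine ge_of_tendsto' hT fun N => ?_
  set p := PowerSeries.trunc N (PowerSeries.exp ℂ)
  have hPa : Commute (aeval a p) a := by
    have := congrArg (aeval a) (mul_comm p X)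
    rwa [map_mul, map_mul, aeval_X] at this
  have hP : spectralRadius ℂ (aeval a p) ≤ ENNReal.ofReal (Real.exp s + T N) := by
    refine iSup₂_le fun w hw => ?_
    rw [spectrum.map_polynomial_aeval] at hw
    obtain ⟨z, hz, rfl⟩ := hw
    dsimp only
    rw [← coe_aeval_eq_eval, ← enorm_eq_nnnorm, ← ofReal_norm]
    refine ENNReal.ofReal_le_ofReal ?_
    calc ‖aeval z p‖ ≤ ‖exp z‖ + ‖exp z - aeval z p‖ := by
          simpa only [norm_sub_rev] using norm_le_norm_add_norm_sub' (aeval z p) (exp z)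
      _ ≤ Real.exp s + T N := by
          gcongr
          · rw [← Complex.exp_eq_exp_ℂ, Complex.norm_exp]
            exact Real.exp_le_exp.mpr (h z hz)
          · exact norm_exp_sub_aeval_trunc_exp_le z (spectrum.norm_le_norm_of_mem hz) N
  calc spectralRadius ℂ (exp a) = spectralRadius ℂ (aeval a p + (exp a - aeval a p)) := by
        rw [add_sub_cancel]
    _ ≤ spectralRadius ℂ (aeval a p) + ‖exp a - aeval a p‖₊ :=
        (hPa.exp_right.sub_right (Commute.refl _)).spectralRadius_add_le
    _ ≤ ENNReal.ofReal (Real.exp s + T N) + ENNReal.ofReal (T N) := by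
        rw [← enorm_eq_nnnorm, ← ofReal_norm]
        gcongr
        exact norm_exp_sub_aeval_trunc_exp_le a le_rfl N
    _ = ENNReal.ofReal (Real.exp s + 2 * T N) := by
        rw [← ENNReal.ofReal_add (by positivity) (hT0 N)]
        ring_nf

theorem norm_exp_smul_le_of_norm_exp_pow_le {a : A} {C β : ℝ} (hβ : 0 ≤ β)
    (h : ∀ n : ℕ, ‖exp a ^ n‖ ≤ C * Real.exp (-β * n)) {t : ℝ} (ht : 0 ≤ t) :
    ‖exp ((t : ℂ) • a)‖ ≤ C * Real.exp (‖a‖ + β) * Real.exp (-β * t) := by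
  let +nondep : NormedAlgebra ℚ A := .restrictScalars ℚ ℂ A
  set n := ⌊t⌋₊
  set r := t - n
  have hr0 : 0 ≤ r := sub_nonneg.mpr (Nat.floor_le ht)
  have hr1 : r ≤ 1 := by linarith [Nat.lt_floor_add_one t]
  have hC : 0 ≤ C := by simpa using (norm_nonneg _).trans (h 0)
  have hsplit : exp ((t : ℂ) • a) = exp a ^ n * exp ((r : ℂ) • a) := by
    rw [← exp_nsmul, ← Nat.cast_smul_eq_nsmul ℂ,
      ← exp_add_of_commute (((Commute.refl a).smul_left _).smul_right _), ← add_smul]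
    congr 2
    push_cast [r]
    ring
  have hrem : ‖exp ((r : ℂ) • a)‖ ≤ Real.exp ‖a‖ := by
    refine (norm_exp_le_exp_norm _).trans (Real.exp_le_exp.mpr ?_)
    rw [norm_smul, Complex.norm_real, Real.norm_of_nonneg hr0]
    exact mul_le_of_le_one_left (norm_nonneg a) hr1
  calc ‖exp ((t : ℂ) • a)‖ ≤ ‖exp a ^ n‖ * ‖exp ((r : ℂ) • a)‖ := hsplit ▸ norm_mul_le _ _
    _ ≤ C * Real.exp (-β * n) * Real.exp ‖a‖ :=
        mul_le_mul (h n) hrem (norm_nonneg _) (by positivity)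
    _ ≤ C * Real.exp (‖a‖ + β) * Real.exp (-β * t) := by
        rw [mul_assoc, mul_assoc, ← Real.exp_add, ← Real.exp_add]
        have : β * r ≤ β := mul_le_of_le_one_right hβ hr1
        exact mul_le_mul_of_nonneg_left (Real.exp_le_exp.mpr (by linarith)) hC

theorem exists_norm_exp_smul_le_of_forall_re_neg {a : A}
    (h : ∀ z ∈ spectrum ℂ a, z.re < 0) : ∃ M β : ℝ, 1 ≤ M ∧ 0 < β ∧
      ∀ t : ℝ, 0 ≤ t → ‖exp ((t : ℂ) • a)‖ ≤ M * Real.exp (-β * t) := by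
  have : Nontrivial A := NormOneClass.nontrivial
  obtain ⟨z₀, hz₀, hmax⟩ := (spectrum.isCompact a).exists_isMaxOn (spectrum.nonempty a)
    Complex.continuous_re.continuousOn
  set β := -z₀.re / 2 with hβ_def
  have hβ : 0 < β := by linarith [h z₀ hz₀]
  have hrad : spectralRadius ℂ (exp a) < ENNReal.ofReal (Real.exp (-β)) := by
    refine (spectralRadius_exp_le_of_forall_re_le fun z hz => hmax hz).trans_lt ?_
    rw [ENNReal.ofReal_lt_ofReal_iff (Real.exp_pos _)]
    exact Real.exp_lt_exp.mpr (by linarith)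
  obtain ⟨C, hC⟩ := exists_norm_pow_le_of_spectralRadius_lt hrad
  refine ⟨max 1 (C * Real.exp (‖a‖ + β)), β, le_max_left _ _, hβ, fun t ht => ?_⟩
  refine (norm_exp_smul_le_of_norm_exp_pow_le (C := C) hβ.le (fun n => ?_) ht).trans ?_
  · rw [mul_comm _ (n : ℝ), Real.exp_nat_mul]
    exact hC n
  · gcongr
    exact le_max_right _ _

end NormOneClass

theorem stmt_0 {X : Type*} [NormedAddCommGroup X] [NormedSpace ℂ X] [CompleteSpace X]
    (A : X →L[ℂ] X) (hspec : ∀ z ∈ spectrum ℂ A, z.re < 0) :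
    ∃ M β : ℝ, 1 ≤ M ∧ 0 < β ∧
      ∀ t : ℝ, 0 ≤ t → ‖exp ((t : ℂ) • A)‖ ≤ M * Real.exp (-β * t) := by
  rcases subsingleton_or_nontrivial X with hX | hX
  · refine ⟨1, 1, le_rfl, one_pos, fun t _ => ?_⟩
    rw [Subsingleton.elim (exp ((t : ℂ) • A)) 0, norm_zero]
    positivity
  · exact exists_norm_exp_smul_le_of_forall_re_neg hspec
end

section
/- Let Γ be an invertible bounded linear operator on a Banach space F, and let B, Δ̃, C be bounded operators (C : F → F_Y, B : F_U → F, Δ̃ : F_Y → F_U) such that ‖C ∘ Γ⁻¹ ∘ B ∘ Δ̃‖ < 1. Then Γ + B ∘ Δ̃ ∘ C is invertible. -/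
/-!
Factor `Γ + BΔC = Γ (1 + HC)` with `H = Γ⁻¹BΔ`. Since `‖CH‖ < 1`, the Neumann series makes
`1 + CH` invertible, and then so is `1 + HC`, with inverse `1 - H (1 + CH)⁻¹ C`.
-/

namespace ContinuousLinearMap

variable {R E G : Type*} [Ring R]
  [TopologicalSpace E] [AddCommGroup E] [IsTopologicalAddGroup E] [Module R E]
  [TopologicalSpace G] [AddCommGroup G] [IsTopologicalAddGroup G] [Module R G]

theorem isUnit_one_add_comp_of_isUnit_one_add_comp_swap {H : G →L[R] E} {C : E →L[R] G}
    (hCH : IsUnit (1 + C.comp H)) : IsUnit (1 + H.comp C) := by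
  obtain ⟨v, hv_right, hv_left⟩ := isUnit_iff_exists.mp hCH
  have hHv_right : ∀ y, H (v y) + H (C (H (v y))) = H y := fun y => by
    simpa using congr(H ($hv_right y))
  have hHv_left : ∀ y, H (v y) + H (v (C (H y))) = H y := fun y => by
    simpa using congr(H ($hv_left y))
  refine isUnit_iff_exists.mpr ⟨1 - H.comp (v.comp C), ?_, ?_⟩
  all_goals
    ext x
    simp only [mul_apply_eq_comp, add_apply, sub_apply, one_apply_eq_self, comp_apply, map_add,
      map_sub]
  · linear_combination (norm := abel) -hHv_right (C x)
  · linear_combination (norm := abel) -hHv_left (C x)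

end ContinuousLinearMap

open ContinuousLinearMap

theorem stmt_2_general {F FU FY : Type*}
    [NormedAddCommGroup F] [NormedSpace ℂ F]
    [NormedAddCommGroup FU] [NormedSpace ℂ FU]
    [NormedAddCommGroup FY] [NormedSpace ℂ FY] [CompleteSpace FY]
    (Γ Γinv : F →L[ℂ] F) (hΓ₁ : Γ * Γinv = 1) (hΓ₂ : Γinv * Γ = 1)
    (B : FU →L[ℂ] F) (C : F →L[ℂ] FY) (Δ : FY →L[ℂ] FU)
    (h : ‖C.comp ((Γinv.comp B).comp Δ)‖ < 1) :
    IsUnit (Γ + B.comp (Δ.comp C)) := by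
  set H := (Γinv.comp B).comp Δ
  have hfactor : Γ + B.comp (Δ.comp C) = Γ * (1 + H.comp C) := by
    have hΓΓinv : ∀ y, Γ (Γinv y) = y := fun y => congr($hΓ₁ y)
    ext x
    simp [H, hΓΓinv]
  have hCH : IsUnit (1 + C.comp H) := by
    simpa using isUnit_one_sub_of_norm_lt_one (x := -C.comp H) (by simpa using h)
  rw [hfactor]
  have hΓ : IsUnit Γ := ⟨⟨Γ, Γinv, hΓ₁, hΓ₂⟩, rfl⟩
  exact hΓ.mul (isUnit_one_add_comp_of_isUnit_one_add_comp_swap hCH)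

theorem stmt_2 {F FU FY : Type*}
    [NormedAddCommGroup F] [NormedSpace ℂ F] [CompleteSpace F]
    [NormedAddCommGroup FU] [NormedSpace ℂ FU] [CompleteSpace FU]
    [NormedAddCommGroup FY] [NormedSpace ℂ FY] [CompleteSpace FY]
    (Γ Γinv : F →L[ℂ] F) (hΓ₁ : Γ * Γinv = 1) (hΓ₂ : Γinv * Γ = 1)
    (B : FU →L[ℂ] F) (C : F →L[ℂ] FY) (Δ : FY →L[ℂ] FU)
    (h : ‖C.comp ((Γinv.comp B).comp Δ)‖ < 1) :
    IsUnit (Γ + B.comp (Δ.comp C)) :=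
  stmt_2_general Γ Γinv hΓ₁ hΓ₂ B C Δ h
end

section
/- For A = [[−1, 1], [−1, −1]] on ℂ² with the ℓ¹ norm, for every unit vector x, ∫₀^∞ ‖exp(tA) x‖ dt ≤ ∫₀^∞ e^{−t}(|cos t| + |sin t|) dt, with equality attained at x = e₁; in particular sup_{‖x‖=1} ∫₀^∞ ‖exp(tA)x‖ dt = ∫₀^∞ e^{−t}(|cos t| + |sin t|) dt. -/
open NormedSpace

/-- The `ℓ¹` norm of `exp(tA)x` on `ℂ²`, integrated over `t ∈ (0,∞)`, for
`A = [[-1,1],[-1,-1]]`. -/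
noncomputable def expIntegral (A : Matrix (Fin 2) (Fin 2) ℂ)
    (x : PiLp 1 (fun _ : Fin 2 => ℂ)) : ℝ :=
  ∫ t in Set.Ioi (0 : ℝ),
    ‖(WithLp.equiv 1 (Fin 2 → ℂ)).symm
        ((exp ((t : ℂ) • A)).mulVec (WithLp.equiv 1 (Fin 2 → ℂ) x))‖

/-!
`A = [[-1, 1], [-1, -1]]` is the image of `-1 + i` under the real-algebra embedding
`a + b i ↦ [[a, b], [-b, a]]` of `ℂ` into `2 × 2` matrices, which commutes with `exp`; hence
`exp (t A)` is the image of `e^{t(-1 + i)}`, i.e. `e^{-t} [[cos t, sin t], [-sin t, cos t]]`.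
By the triangle inequality the image of `w` has `ℓ¹` operator norm at most `|Re w| + |Im w|`,
attained at `e₁`; integrating this pointwise bound gives the inequality, its equality case, and
thus the supremum.
-/

open Complex MeasureTheory Set Matrix

noncomputable def rotMatrix : ℂ →ₐ[ℝ] Matrix (Fin 2) (Fin 2) ℂ where
  toFun z := !![(z.re : ℂ), (z.im : ℂ); -(z.im : ℂ), (z.re : ℂ)]
  map_one' := by ext i j; fin_cases i <;> fin_cases j <;> simp
  map_mul' z w := by
    ext i j; fin_cases i <;> fin_cases j <;> simp [Matrix.mul_apply] <;> ring
  map_zero' := by ext i j; fin_cases i <;> fin_cases j <;> simp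
  map_add' z w := by ext i j; fin_cases i <;> fin_cases j <;> simp; ring
  commutes' r := by
    ext i j; fin_cases i <;> fin_cases j <;> simp [Algebra.algebraMap_eq_smul_one]

lemma rotMatrix_apply (z : ℂ) :
    rotMatrix z = !![(z.re : ℂ), (z.im : ℂ); -(z.im : ℂ), (z.re : ℂ)] := rfl

@[fun_prop]
lemma continuous_rotMatrix : Continuous rotMatrix := by
  refine continuous_matrix fun i j => ?_
  fin_cases i <;> fin_cases j <;> simp [rotMatrix_apply] <;> fun_prop

lemma exp_rotMatrix (z : ℂ) : exp (rotMatrix z) = rotMatrix (cexp z) := by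
  -- any normed-ring structure inducing the entrywise topology makes `map_exp` applicable
  let : NormedRing (Matrix (Fin 2) (Fin 2) ℂ) := Matrix.linftyOpNormedRing
  rw [Complex.exp_eq_exp_ℂ]
  exact (map_exp rotMatrix continuous_rotMatrix z).symm

lemma smul_eq_rotMatrix (t : ℝ) :
    (t : ℂ) • !![-1, 1; -1, -1] = rotMatrix (t * (-1 + I)) := by
  ext i j; fin_cases i <;> fin_cases j <;> simp [rotMatrix_apply]

lemma norm_rotMatrix_mulVec_le (w : ℂ) (x : PiLp 1 (fun _ : Fin 2 => ℂ)) :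
    ‖(WithLp.equiv 1 (Fin 2 → ℂ)).symm (rotMatrix w *ᵥ WithLp.equiv 1 (Fin 2 → ℂ) x)‖
      ≤ (|w.re| + |w.im|) * ‖x‖ := by
  simp only [PiLp.norm_eq_of_L1, rotMatrix_apply, WithLp.equiv_apply, cons_mulVec, dotProduct, Fin.sum_univ_two,
    Fin.isValue, cons_val_zero, cons_val_one, cons_val_fin_one, neg_mul, empty_mulVec,
    WithLp.equiv_symm_apply]
  calc _ ≤ (|w.re| * ‖x 0‖ + |w.im| * ‖x 1‖) + (|w.im| * ‖x 0‖ + |w.re| * ‖x 1‖) := by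
        gcongr <;> refine (norm_add_le _ _).trans ?_ <;> simp
    _ = _ := by ring

lemma norm_rotMatrix_mulVec_single (w : ℂ) :
    ‖(WithLp.equiv 1 (Fin 2 → ℂ)).symm (rotMatrix w *ᵥ ![1, 0])‖ = |w.re| + |w.im| := by
  simp [PiLp.norm_eq_of_L1, rotMatrix_apply]

lemma abs_re_add_abs_im_exp (t : ℝ) :
    |(cexp (t * (-1 + I))).re| + |(cexp (t * (-1 + I))).im|
      = Real.exp (-t) * (|Real.cos t| + |Real.sin t|) := by
  simp [Complex.exp_re, Complex.exp_im, abs_mul, mul_add]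

lemma integrableOn_exp_neg_mul_abs_cos_add_abs_sin :
    IntegrableOn (fun t => Real.exp (-t) * (|Real.cos t| + |Real.sin t|)) (Ioi 0) := by
  refine Integrable.mono' ((exp_neg_integrableOn_Ioi 0 one_pos).const_mul 2)
    (Continuous.aestronglyMeasurable (by fun_prop)) (ae_of_all _ fun t => ?_)
  have := Real.abs_cos_le_one t
  have := Real.abs_sin_le_one t
  rw [Real.norm_of_nonneg (by positivity), neg_one_mul, mul_comm]
  gcongr
  linarith

lemma expIntegral_eq (x : PiLp 1 (fun _ : Fin 2 => ℂ)) :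
    expIntegral !![-1, 1; -1, -1] x = ∫ t in Ioi (0 : ℝ),
      ‖(WithLp.equiv 1 (Fin 2 → ℂ)).symm
        (rotMatrix (cexp (t * (-1 + I))) *ᵥ WithLp.equiv 1 (Fin 2 → ℂ) x)‖ := by
  simp_rw [expIntegral, smul_eq_rotMatrix, exp_rotMatrix]

lemma expIntegral_le (x : PiLp 1 (fun _ : Fin 2 => ℂ)) :
    expIntegral !![-1, 1; -1, -1] x
      ≤ (∫ t in Ioi (0 : ℝ), Real.exp (-t) * (|Real.cos t| + |Real.sin t|)) * ‖x‖ := by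
  rw [expIntegral_eq, ← integral_mul_const]
  refine integral_mono_of_nonneg (ae_of_all _ fun t => norm_nonneg _)
    (integrableOn_exp_neg_mul_abs_cos_add_abs_sin.mul_const _) (ae_of_all _ fun t => ?_)
  simpa only [abs_re_add_abs_im_exp] using norm_rotMatrix_mulVec_le (cexp (t * (-1 + I))) x

lemma expIntegral_single :
    expIntegral !![-1, 1; -1, -1] ((WithLp.equiv 1 (Fin 2 → ℂ)).symm ![1, 0])
      = ∫ t in Ioi (0 : ℝ), Real.exp (-t) * (|Real.cos t| + |Real.sin t|) := by
  simp_rw [expIntegral_eq, Equiv.apply_symm_apply, norm_rotMatrix_mulVec_single,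
    abs_re_add_abs_im_exp]

theorem stmt_11 :
    (∀ x : PiLp 1 (fun _ : Fin 2 => ℂ), ‖x‖ = 1 →
        expIntegral !![-1, 1; -1, -1] x
          ≤ ∫ t in Set.Ioi (0 : ℝ), Real.exp (-t) * (|Real.cos t| + |Real.sin t|)) ∧
    expIntegral !![-1, 1; -1, -1] ((WithLp.equiv 1 (Fin 2 → ℂ)).symm ![1, 0])
        = ∫ t in Set.Ioi (0 : ℝ), Real.exp (-t) * (|Real.cos t| + |Real.sin t|) ∧
    sSup {r : ℝ | ∃ x : PiLp 1 (fun _ : Fin 2 => ℂ), ‖x‖ = 1 ∧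
          r = expIntegral !![-1, 1; -1, -1] x}
        = ∫ t in Set.Ioi (0 : ℝ), Real.exp (-t) * (|Real.cos t| + |Real.sin t|) := by
  have hle : ∀ x : PiLp 1 (fun _ : Fin 2 => ℂ), ‖x‖ = 1 → expIntegral !![-1, 1; -1, -1] x
      ≤ ∫ t in Ioi (0 : ℝ), Real.exp (-t) * (|Real.cos t| + |Real.sin t|) := fun x hx => by
    simpa [hx] using expIntegral_le x
  have hunit : ‖(WithLp.equiv 1 (Fin 2 → ℂ)).symm ![(1 : ℂ), 0]‖ = 1 := by
    simp [PiLp.norm_eq_of_L1]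
  refine ⟨hle, expIntegral_single, IsGreatest.csSup_eq ⟨⟨_, hunit, expIntegral_single.symm⟩, ?_⟩⟩
  rintro r ⟨x, hx, rfl⟩
  exact hle x hx
end

section
/- Let (T_t) be an exponentially stable strongly continuous semigroup on a Banach space X. Then the norm of the convolution operator G, (Gf)(t) = ∫₀ᵗ T_τ f(t−τ) dτ, on L¹(ℝ₊, X) equals sup_{‖x‖=1} ∫₀^∞ ‖T_t x‖ dt. -/
/-!
For `f ∈ L¹(ℝ₊, X)`, Tonelli and the substitution `s = t - τ` give
`∫ ‖Gf‖ ≤ ∫₀^∞ ∫₀^∞ ‖T_τ f(s)‖ dτ ds ≤ S ‖f‖₁`, where `S = sup_{‖x‖=1} ∫ ‖T_t x‖ dt`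
(by homogeneity `∫ ‖T_t y‖ dt ≤ S ‖y‖`). Conversely, `G` applied to the approximate
identity `a⁻¹ 1_{[0,a]} x` is `a⁻¹ ∫_{t-a}^t T_τ x dτ` for `t ≥ a`, which tends to `T_t x`
as `a → 0⁺` by the fundamental theorem of calculus; Fatou's lemma then gives
`∫ ‖T_t x‖ dt ≤ ‖G‖ ‖x‖`.
-/

open MeasureTheory Filter Set Function Topology
open scoped ENNReal

theorem lintegral_lintegral_sub_eq {G : Type*} [AddGroup G] [MeasurableSpace G]
    [MeasurableAdd₂ G] [MeasurableNeg G] {μ : Measure G} [SFinite μ] [μ.IsAddRightInvariant]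
    {f : G → G → ℝ≥0∞} (hf : Measurable (uncurry f)) :
    ∫⁻ t, ∫⁻ τ, f τ (t - τ) ∂μ ∂μ = ∫⁻ s, ∫⁻ τ, f τ s ∂μ ∂μ := by
  have hf' : Measurable (uncurry fun t τ => f τ (t - τ)) :=
    hf.comp (measurable_snd.prodMk (measurable_fst.sub measurable_snd))
  rw [lintegral_lintegral_swap hf'.aemeasurable, ← lintegral_lintegral_swap hf.aemeasurable]
  exact lintegral_congr fun τ => lintegral_sub_right_eq_self (f τ) τ

theorem lintegral_Ici_lintegral_Icc_sub {f : ℝ → ℝ → ℝ≥0∞} (hf : Measurable (uncurry f)) :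
    ∫⁻ t in Ici 0, ∫⁻ τ in Icc 0 t, f τ (t - τ) = ∫⁻ s in Ici 0, ∫⁻ τ in Ici 0, f τ s := by
  have key := lintegral_lintegral_sub_eq (μ := volume)
    (f := fun τ s => (Ici 0 ×ˢ Ici 0).indicator (uncurry f) (τ, s))
    (hf.indicator (measurableSet_Ici.prod measurableSet_Ici))
  convert key using 1
  · refine (setLIntegral_eq_of_support_subset fun t ht => ?_).trans (lintegral_congr fun t => ?_)
    · by_contra h
      simp_all [Icc_eq_empty_of_lt (not_le.mp (mem_Ici.not.mp h))]
    · rw [← lintegral_indicator measurableSet_Icc]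
      congr 1 with τ
      simp only [indicator, mem_Icc, mem_prod, mem_Ici, sub_nonneg, uncurry_apply_pair]
  · rw [← lintegral_indicator measurableSet_Ici]
    congr 1 with s
    by_cases hs : 0 ≤ s
    · rw [indicator_of_mem (mem_Ici.mpr hs), ← lintegral_indicator measurableSet_Ici]
      simp [indicator, hs]
    · simp [indicator, hs]

theorem continuous_uncurry_apply_of_norm_le {ι 𝕜 E F : Type*} [TopologicalSpace ι]
    [NontriviallyNormedField 𝕜] [NormedAddCommGroup E] [NormedSpace 𝕜 E]
    [NormedAddCommGroup F] [NormedSpace 𝕜 F] {T : ι → E →L[𝕜] F}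
    (hT : ∀ x, Continuous fun i => T i x) {C : ℝ} (hC : ∀ i, ‖T i‖ ≤ C) :
    Continuous fun p : ι × E => T p.1 p.2 := by
  refine continuous_iff_continuousAt.2 fun ⟨i₀, x₀⟩ => ?_
  have hdist : ∀ p : ι × E,
      ‖T p.1 p.2 - T i₀ x₀‖ ≤ C * ‖p.2 - x₀‖ + ‖T p.1 x₀ - T i₀ x₀‖ := fun ⟨i, x⟩ =>
    calc ‖T i x - T i₀ x₀‖ = ‖T i (x - x₀) + (T i x₀ - T i₀ x₀)‖ := by
          rw [map_sub, sub_add_sub_cancel]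
      _ ≤ C * ‖x - x₀‖ + ‖T i x₀ - T i₀ x₀‖ :=
          norm_add_le_of_le ((T i).le_of_opNorm_le (hC i) _) le_rfl
  have hbound : Tendsto (fun p : ι × E => C * ‖p.2 - x₀‖ + ‖T p.1 x₀ - T i₀ x₀‖)
      (𝓝 (i₀, x₀)) (𝓝 0) := by
    have : Continuous fun p : ι × E => C * ‖p.2 - x₀‖ + ‖T p.1 x₀ - T i₀ x₀‖ := by fun_prop
    simpa using this.tendsto (i₀, x₀)
  exact tendsto_iff_norm_sub_tendsto_zero.2
    (squeeze_zero (fun _ => norm_nonneg _) hdist hbound)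

theorem le_sSup_mul_norm_of_homogeneous {𝕜 E : Type*} [RCLike 𝕜] [NormedAddCommGroup E]
    [NormedSpace 𝕜 E] {φ : E → ℝ} (hφ : ∀ (c : 𝕜) (y : E), φ (c • y) = ‖c‖ * φ y)
    (hbdd : BddAbove {r | ∃ x : E, ‖x‖ = 1 ∧ r = φ x}) (y : E) :
    φ y ≤ sSup {r | ∃ x : E, ‖x‖ = 1 ∧ r = φ x} * ‖y‖ := by
  rcases eq_or_ne y 0 with rfl | hy
  · simpa using (hφ 0 0).le
  have hunit : ‖(‖y‖⁻¹ : 𝕜) • y‖ = 1 := norm_smul_inv_norm hy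
  calc φ y = ‖y‖ * φ ((‖y‖⁻¹ : 𝕜) • y) := by
        rw [hφ, norm_inv, RCLike.norm_ofReal, abs_norm, ← mul_assoc,
          mul_inv_cancel₀ (norm_ne_zero_iff.2 hy), one_mul]
    _ ≤ ‖y‖ * sSup {r | ∃ x : E, ‖x‖ = 1 ∧ r = φ x} := by
        gcongr
        exact le_csSup hbdd ⟨_, hunit, rfl⟩
    _ = _ := mul_comm _ _

theorem tendsto_inv_smul_integral_Icc_sub {F : Type*} [NormedAddCommGroup F] [NormedSpace ℝ F]
    [CompleteSpace F] {g : ℝ → F} (hg : Continuous g) (t : ℝ) :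
    Tendsto (fun a : ℝ => a⁻¹ • ∫ τ in Icc (t - a) t, g τ) (𝓝[>] 0) (𝓝 (g t)) := by
  have hderiv : HasDerivAt (fun u => ∫ τ in (0 : ℝ)..u, g τ) (g t) t :=
    (hg.integral_hasStrictDerivAt 0 t).hasDerivAt
  have hneg : Tendsto (fun a : ℝ => -a) (𝓝[>] 0) (𝓝[≠] 0) :=
    tendsto_nhdsWithin_of_tendsto_nhds_of_eventually_within _
      (by simpa using (continuous_neg.tendsto (0 : ℝ)).mono_left nhdsWithin_le_nhds)
      (eventually_nhdsWithin_of_forall fun a (ha : 0 < a) => neg_ne_zero.2 ha.ne')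
  refine ((hasDerivAt_iff_tendsto_slope_zero.1 hderiv).comp hneg).congr' ?_
  filter_upwards [self_mem_nhdsWithin] with a (ha : 0 < a)
  have hint : ∀ b c : ℝ, IntervalIntegrable g volume b c := fun b c => hg.intervalIntegrable b c
  simp only [comp_apply, ← sub_eq_add_neg, inv_neg, neg_smul, ← smul_neg, neg_sub,
    intervalIntegral.integral_interval_sub_left (hint 0 t) (hint 0 (t - a)),
    intervalIntegral.integral_of_le (sub_le_self t ha.le), integral_Icc_eq_integral_Ioc]

section

variable {𝕜 E F : Type*} [NontriviallyNormedField 𝕜] [NormedAddCommGroup E] [NormedSpace 𝕜 E]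
  [NormedAddCommGroup F] [NormedSpace 𝕜 F] [NormedSpace ℝ F] {T : ℝ → E →L[𝕜] F}

local notation "μ₊" => volume.restrict (Ici (0 : ℝ))

theorem integral_Icc_apply_sub_congr_ae {u v : ℝ → E} (huv : u =ᵐ[μ₊] v)
    (t : ℝ) : ∫ τ in Icc 0 t, T τ (u (t - τ)) = ∫ τ in Icc 0 t, T τ (v (t - τ)) := by
  have hpull : ∀ᵐ τ, 0 ≤ t - τ → u (t - τ) = v (t - τ) :=
    (Measure.measurePreserving_sub_left volume t).quasiMeasurePreserving.ae
      ((ae_restrict_iff' measurableSet_Ici).1 huv)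
  refine integral_congr_ae ((ae_restrict_iff' measurableSet_Icc).2 ?_)
  filter_upwards [hpull] with τ hτ hτt
  rw [hτ (sub_nonneg.2 hτt.2)]

theorem integral_Icc_apply_sub_indicator (x : E) {a t : ℝ} (hat : a ≤ t) :
    ∫ τ in Icc 0 t, T τ ((Icc 0 a).indicator (fun _ => x) (t - τ)) =
      ∫ τ in Icc (t - a) t, T τ x := by
  have hshift : ∀ τ, T τ ((Icc 0 a).indicator (fun _ => x) (t - τ)) =
      (Icc (t - a) t).indicator (fun τ => T τ x) τ := by
    intro τ
    by_cases hτ : τ ∈ Icc (t - a) t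
    · rw [indicator_of_mem hτ, indicator_of_mem]
      exact ⟨by linarith [hτ.2], by linarith [hτ.1]⟩
    · rw [indicator_of_notMem hτ, indicator_of_notMem, map_zero]
      exact fun h => hτ ⟨by linarith [h.2], by linarith [h.1]⟩
  simp_rw [hshift]
  rw [setIntegral_indicator measurableSet_Icc, Icc_inter_Icc, min_self,
    max_eq_right (sub_nonneg.2 hat)]

theorem lintegral_enorm_integral_Icc_apply_sub_le (hT : ∀ x, Continuous fun t => T t x)
    {C : ℝ} (hC : ∀ t, 0 ≤ t → ‖T t‖ ≤ C) {f : ℝ → E} (hf : StronglyMeasurable f) :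
    ∫⁻ t in Ici 0, ‖∫ τ in Icc 0 t, T τ (f (t - τ))‖ₑ ≤
      ∫⁻ s in Ici 0, ∫⁻ τ in Ici 0, ‖T τ (f s)‖ₑ := by
  have hTmax : Continuous fun p : ℝ × E => T (max p.1 0) p.2 :=
    continuous_uncurry_apply_of_norm_le (fun x => (hT x).comp (continuous_id.max continuous_const))
      fun t => hC _ (le_max_right t 0)
  have hmeas : Measurable (uncurry fun τ s => ‖T (max τ 0) (f s)‖ₑ) :=
    (hTmax.comp_stronglyMeasurable
      (measurable_fst.stronglyMeasurable.prodMk (hf.comp_measurable measurable_snd))).enorm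
  calc ∫⁻ t in Ici 0, ‖∫ τ in Icc 0 t, T τ (f (t - τ))‖ₑ
      ≤ ∫⁻ t in Ici 0, ∫⁻ τ in Icc 0 t, ‖T (max τ 0) (f (t - τ))‖ₑ := by
        refine lintegral_mono fun t => (enorm_integral_le_lintegral_enorm _).trans_eq ?_
        exact setLIntegral_congr_fun measurableSet_Icc fun τ hτ => by rw [max_eq_left hτ.1]
    _ = ∫⁻ s in Ici 0, ∫⁻ τ in Ici 0, ‖T (max τ 0) (f s)‖ₑ := lintegral_Ici_lintegral_Icc_sub hmeas
    _ = ∫⁻ s in Ici 0, ∫⁻ τ in Ici 0, ‖T τ (f s)‖ₑ := by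
        refine lintegral_congr fun s => setLIntegral_congr_fun measurableSet_Ici fun τ hτ => ?_
        rw [max_eq_left hτ]

theorem norm_apply_le_of_lintegral_enorm_le
    {G : Lp E 1 μ₊ →L[𝕜] Lp F 1 μ₊}
    (hG : ∀ f : Lp E 1 μ₊,
      (G f : ℝ → F) =ᵐ[μ₊] fun t => ∫ τ in Icc 0 t, T τ (f (t - τ)))
    (hT : ∀ x, Continuous fun t => T t x) {C : ℝ} (hC : ∀ t, 0 ≤ t → ‖T t‖ ≤ C)
    {S : ℝ} (hS : 0 ≤ S) (hTS : ∀ y, ∫⁻ τ in Ici 0, ‖T τ y‖ₑ ≤ ENNReal.ofReal (S * ‖y‖))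
    (f : Lp E 1 μ₊) : ‖G f‖ ≤ S * ‖f‖ := by
  have hGf : ‖G f‖ₑ ≤ ENNReal.ofReal S * ‖f‖ₑ :=
    calc ‖G f‖ₑ = ∫⁻ t in Ici 0, ‖∫ τ in Icc 0 t, T τ (f (t - τ))‖ₑ := by
          rw [Lp.enorm_def, eLpNorm_one_eq_lintegral_enorm]
          exact lintegral_congr_ae ((hG f).fun_comp enorm)
      _ ≤ ∫⁻ s in Ici 0, ∫⁻ τ in Ici 0, ‖T τ (f s)‖ₑ :=
          lintegral_enorm_integral_Icc_apply_sub_le hT hC (Lp.stronglyMeasurable f)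
      _ ≤ ∫⁻ s in Ici 0, ENNReal.ofReal S * ‖f s‖ₑ := by
          refine lintegral_mono fun s => (hTS (f s)).trans_eq ?_
          rw [ENNReal.ofReal_mul hS, ofReal_norm]
      _ = ENNReal.ofReal S * ‖f‖ₑ := by
          rw [lintegral_const_mul' _ _ ENNReal.ofReal_ne_top, Lp.enorm_def,
            eLpNorm_one_eq_lintegral_enorm]
  rw [← ofReal_norm, ← ofReal_norm, ← ENNReal.ofReal_mul hS] at hGf
  exact (ENNReal.ofReal_le_ofReal_iff (by positivity)).1 hGf

theorem lintegral_enorm_apply_le_opNorm_mul_norm [CompleteSpace F]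
    {G : Lp E 1 μ₊ →L[𝕜] Lp F 1 μ₊}
    (hG : ∀ f : Lp E 1 μ₊,
      (G f : ℝ → F) =ᵐ[μ₊] fun t => ∫ τ in Icc 0 t, T τ (f (t - τ)))
    (hT : ∀ x, Continuous fun t => T t x) (x : E) :
    ∫⁻ t in Ici 0, ‖T t x‖ₑ ≤ ENNReal.ofReal (‖G‖ * ‖x‖) := by
  obtain ⟨a, ha⟩ := exists_seq_tendsto (𝓝[>] (0 : ℝ))
  have hfin : ∀ n, μ₊ (Icc 0 (a n)) ≠ ∞ := fun n => measure_Icc_lt_top.ne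
  let f (n : ℕ) : Lp E 1 μ₊ := indicatorConstLp 1 measurableSet_Icc (hfin n) x
  let h (n : ℕ) : Lp F 1 μ₊ := (a n)⁻¹ • G (f n)
  have hnorm : ∀ n, 0 < a n → ‖h n‖ ≤ ‖G‖ * ‖x‖ := by
    intro n han
    have hfn : ‖f n‖ = ‖x‖ * a n := by
      rw [norm_indicatorConstLp one_ne_zero ENNReal.one_ne_top, measureReal_restrict_apply
        measurableSet_Icc, inter_eq_left.2 Icc_subset_Ici_self, Real.volume_real_Icc_of_le han.le]
      simp
    calc ‖h n‖ = (a n)⁻¹ * ‖G (f n)‖ := by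
          rw [norm_smul, Real.norm_of_nonneg (inv_nonneg.2 han.le)]
      _ ≤ (a n)⁻¹ * (‖G‖ * (‖x‖ * a n)) := by
          rw [← hfn]; gcongr; exact G.le_opNorm _
      _ = ‖G‖ * ‖x‖ := by field_simp
  have hpos : ∀ᵐ t ∂μ₊, 0 < t := by
    rw [← Measure.restrict_congr_set Ioi_ae_eq_Ici]
    exact ae_restrict_mem measurableSet_Ioi
  have hlim : ∀ᵐ t ∂μ₊, Tendsto (fun n => h n t) atTop (𝓝 (T t x)) := by
    filter_upwards [hpos, ae_all_iff.2 fun n => Lp.coeFn_smul (a n)⁻¹ (G (f n)),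
      ae_all_iff.2 fun n => hG (f n)] with t ht hsmul hconv
    refine ((tendsto_inv_smul_integral_Icc_sub (hT x) t).comp ha).congr' ?_
    filter_upwards [ha.eventually (Ioo_mem_nhdsGT ht)] with n hn
    rw [comp_apply, hsmul n, Pi.smul_apply, hconv n,
      integral_Icc_apply_sub_congr_ae indicatorConstLp_coeFn,
      integral_Icc_apply_sub_indicator x hn.2.le]
  have hbound : ∀ᶠ n in atTop, eLpNorm (h n) 1 μ₊ ≤ ENNReal.ofReal (‖G‖ * ‖x‖) := by
    filter_upwards [ha.eventually self_mem_nhdsWithin] with n (hn : 0 < a n)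
    rw [← Lp.enorm_def, ← ofReal_norm]
    exact ENNReal.ofReal_le_ofReal (hnorm n hn)
  have := Lp.eLpNorm_le_of_ae_tendsto hbound (fun n => Lp.aestronglyMeasurable _) hlim
  rwa [eLpNorm_one_eq_lintegral_enorm] at this

end

theorem stmt_13_general {X : Type*} [NormedAddCommGroup X] [NormedSpace ℂ X] [CompleteSpace X]
    (T : ℝ → X →L[ℂ] X) (M β : ℝ) (hβ : 0 < β)
    (hcont : ∀ x : X, Continuous fun t : ℝ => T t x)
    (hb : ∀ t : ℝ, 0 ≤ t → ‖T t‖ ≤ M * Real.exp (-β * t))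
    (G : Lp X 1 (volume.restrict (Set.Ici (0 : ℝ))) →L[ℂ]
          Lp X 1 (volume.restrict (Set.Ici (0 : ℝ))))
    (hG : ∀ f : Lp X 1 (volume.restrict (Set.Ici (0 : ℝ))),
      (G f : ℝ → X) =ᵐ[volume.restrict (Set.Ici (0 : ℝ))]
        fun t => ∫ τ in Set.Icc (0 : ℝ) t, T τ (f (t - τ))) :
    ‖G‖ = sSup {r : ℝ | ∃ x : X, ‖x‖ = 1 ∧ r = ∫ t in Set.Ioi (0 : ℝ), ‖T t x‖} := by
  have hM : 0 ≤ M := by simpa using (norm_nonneg _).trans (hb 0 le_rfl)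
  have hC : ∀ t, 0 ≤ t → ‖T t‖ ≤ M := fun t ht => (hb t ht).trans
    (mul_le_of_le_one_right hM (Real.exp_le_one_iff.2 (by nlinarith)))
  have hlower := lintegral_enorm_apply_le_opNorm_mul_norm hG hcont
  have hlintegral : ∀ x, ENNReal.ofReal (∫ t in Ioi 0, ‖T t x‖) = ∫⁻ t in Ici 0, ‖T t x‖ₑ := by
    intro x
    rw [Measure.restrict_congr_set Ioi_ae_eq_Ici]
    exact ofReal_integral_norm_eq_lintegral_enorm
      ⟨(hcont x).aestronglyMeasurable, (hlower x).trans_lt ENNReal.ofReal_lt_top⟩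
  have hle : ∀ x, ∫ t in Ioi 0, ‖T t x‖ ≤ ‖G‖ * ‖x‖ := fun x =>
    (ENNReal.ofReal_le_ofReal_iff (by positivity)).1 ((hlintegral x).trans_le (hlower x))
  have hbdd : BddAbove {r : ℝ | ∃ x : X, ‖x‖ = 1 ∧ r = ∫ t in Ioi 0, ‖T t x‖} :=
    ⟨‖G‖, by rintro _ ⟨x, hx, rfl⟩; simpa [hx] using hle x⟩
  have hS : 0 ≤ sSup {r : ℝ | ∃ x : X, ‖x‖ = 1 ∧ r = ∫ t in Ioi 0, ‖T t x‖} :=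
    Real.sSup_nonneg fun _ ⟨_, _, hr⟩ => hr ▸ integral_nonneg fun _ => norm_nonneg _
  have hhom : ∀ (c : ℂ) (y : X), ∫ t in Ioi 0, ‖T t (c • y)‖ = ‖c‖ * ∫ t in Ioi 0, ‖T t y‖ := by
    intro c y
    simp_rw [map_smul, norm_smul]
    exact integral_const_mul _ _
  refine le_antisymm (G.opNorm_le_bound hS fun f => ?_) (Real.sSup_le ?_ (norm_nonneg G))
  · refine norm_apply_le_of_lintegral_enorm_le hG hcont hC hS (fun y => ?_) f
    rw [← hlintegral]
    exact ENNReal.ofReal_le_ofReal (le_sSup_mul_norm_of_homogeneous hhom hbdd y)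
  · rintro _ ⟨x, hx, rfl⟩
    simpa [hx] using hle x

theorem stmt_13 {X : Type*} [NormedAddCommGroup X] [NormedSpace ℂ X] [CompleteSpace X]
    [Nontrivial X]
    (T : ℝ → X →L[ℂ] X) (M β : ℝ) (hM : 1 ≤ M) (hβ : 0 < β)
    (hT0 : T 0 = 1)
    (hsem : ∀ s t : ℝ, 0 ≤ s → 0 ≤ t → T (s + t) = (T s).comp (T t))
    (hcont : ∀ x : X, Continuous fun t : ℝ => T t x)
    (hb : ∀ t : ℝ, 0 ≤ t → ‖T t‖ ≤ M * Real.exp (-β * t))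
    (G : Lp X 1 (volume.restrict (Set.Ici (0 : ℝ))) →L[ℂ]
          Lp X 1 (volume.restrict (Set.Ici (0 : ℝ))))
    (hG : ∀ f : Lp X 1 (volume.restrict (Set.Ici (0 : ℝ))),
      (G f : ℝ → X) =ᵐ[volume.restrict (Set.Ici (0 : ℝ))]
        fun t => ∫ τ in Set.Icc (0 : ℝ) t, T τ (f (t - τ))) :
    ‖G‖ = sSup {r : ℝ | ∃ x : X, ‖x‖ = 1 ∧ r = ∫ t in Set.Ioi (0 : ℝ), ‖T t x‖} :=
  stmt_13_general T M β hβ hcont hb G hG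
end

section
/- Let (U(t,τ))_{t≥τ≥0} be an exponentially bounded evolution family on a Banach space X, and let (E^t)_{t≥0} on C₀₀(ℝ₊,X) be defined by (E^t f)(τ) = U(τ, τ−t) f(τ−t) for τ ≥ t and 0 for τ < t. If there exist M ≥ 1, α > 0 with ‖E^t‖ ≤ M e^{−αt} for all t ≥ 0, then ‖U(t,τ)‖ ≤ M e^{−α(t−τ)} for all t ≥ τ ≥ 0; conversely if ‖U(t,τ)‖ ≤ M e^{−β(t−τ)} with β > 0 then ‖E^t‖ ≤ M e^{−βt}. -/
/-- The evolution-semigroup action on functions on the half-line: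
`(E^t f)(τ) = U(τ, τ−t) f(τ−t)` for `τ ≥ t` and `0` otherwise. -/
noncomputable def evolSG {X : Type*} [NormedAddCommGroup X] [NormedSpace ℂ X]
    (U : ℝ → ℝ → X →L[ℂ] X) (t : ℝ) (f : ℝ → X) : ℝ → X :=
  fun τ => if t ≤ τ then U τ (τ - t) (f (τ - t)) else 0

/-- Membership in `C₀₀(ℝ₊, X)`: continuous, vanishing at `0` (and on the negative
half-line, where we extend by zero) and at infinity. -/
def MemC00 {X : Type*} [NormedAddCommGroup X] [NormedSpace ℂ X] (f : ℝ → X) : Prop :=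
  Continuous f ∧ f 0 = 0 ∧ (∀ σ : ℝ, σ < 0 → f σ = 0) ∧
    Filter.Tendsto f Filter.atTop (nhds 0)

/-!
If `‖E^t‖ ≤ K(t)`, apply `E^{t-τ}` to a function in `C₀₀` of norm `‖x‖` taking the value `x`
at `τ > 0`: evaluating at `t` gives `‖U(t,τ) x‖ ≤ K(t-τ) ‖x‖`. The case `τ = 0` follows from
strong continuity along the diagonal shift `(t + ε, τ + ε) → (t, τ)`, which keeps `t - τ`
fixed. Conversely `‖(E^t f)(τ)‖ ≤ ‖U(τ, τ-t)‖ ‖f(τ-t)‖` directly.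
-/

open Filter Topology

section EvolutionSemigroup

variable {X : Type*} [NormedAddCommGroup X] [NormedSpace ℂ X]

lemma MemC00.bddAbove_norm {f : ℝ → X} (hf : MemC00 f) :
    BddAbove (Set.range fun σ => ‖f σ‖) := by
  obtain ⟨hcont, -, hneg, hlim⟩ := hf
  obtain ⟨N, hN⟩ :=
    eventually_atTop.1 ((tendsto_norm_zero.comp hlim).eventually (eventually_le_nhds one_pos))
  obtain ⟨C, hC⟩ :=
    (isCompact_Icc (a := (0 : ℝ)) (b := max N 0)).exists_bound_of_continuousOn hcont.continuousOn
  refine ⟨max C 1, ?_⟩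
  rintro _ ⟨σ, rfl⟩
  rcases lt_or_ge σ 0 with hσ | hσ
  · simp [hneg σ hσ]
  rcases le_or_gt σ (max N 0) with hσN | hσN
  · exact (hC σ ⟨hσ, hσN⟩).trans (le_max_left _ _)
  · exact (hN σ ((le_max_left N 0).trans hσN.le)).trans (le_max_right _ _)

lemma exists_memC00_apply_eq {τ : ℝ} (hτ : 0 < τ) (x : X) :
    ∃ f : ℝ → X, MemC00 f ∧ f τ = x ∧ (⨆ σ, ‖f σ‖) = ‖x‖ := by
  let φ : ContDiffBump τ := ⟨τ / 2, τ, half_pos hτ, half_lt_self hτ⟩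
  have hφ_zero : ∀ σ, σ ≤ 0 → φ σ = 0 := fun σ hσ =>
    φ.zero_of_le_dist (by rw [Real.dist_eq, abs_of_nonpos (by linarith)]; linarith)
  have hf : MemC00 fun σ => φ σ • x :=
    ⟨φ.continuous.smul continuous_const, by simp [hφ_zero 0 le_rfl],
      fun σ hσ => by simp [hφ_zero σ hσ.le],
      (φ.hasCompactSupport.smul_right.is_zero_at_infty).mono_left atTop_le_cocompact⟩
  have hfτ : φ τ • x = x := by
    simp [φ.one_of_mem_closedBall (Metric.mem_closedBall_self (half_pos hτ).le)]
  refine ⟨_, hf, hfτ, le_antisymm (ciSup_le fun σ => ?_) ?_⟩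
  · rw [norm_smul, Real.norm_of_nonneg φ.nonneg]
    exact mul_le_of_le_one_left (norm_nonneg x) φ.le_one
  · calc ‖x‖ = ‖φ τ • x‖ := by rw [hfτ]
      _ ≤ _ := le_ciSup hf.bddAbove_norm τ

variable {U : ℝ → ℝ → X →L[ℂ] X}

lemma norm_evolSG_le {t K : ℝ} (hU : ∀ τ, t ≤ τ → ‖U τ (τ - t)‖ ≤ K) {f : ℝ → X}
    (hf : BddAbove (Set.range fun σ => ‖f σ‖)) (τ : ℝ) :
    ‖evolSG U t f τ‖ ≤ K * ⨆ σ, ‖f σ‖ := by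
  have hK : 0 ≤ K := (norm_nonneg _).trans (hU t le_rfl)
  have hsup : 0 ≤ ⨆ σ, ‖f σ‖ := Real.iSup_nonneg fun σ => norm_nonneg _
  unfold evolSG
  split_ifs with htτ
  · calc ‖U τ (τ - t) (f (τ - t))‖ ≤ ‖U τ (τ - t)‖ * ‖f (τ - t)‖ := (U τ (τ - t)).le_opNorm _
      _ ≤ K * ⨆ σ, ‖f σ‖ := mul_le_mul (hU τ htτ) (le_ciSup hf _) (norm_nonneg _) hK
  · simpa using mul_nonneg hK hsup

variable {K : ℝ → ℝ}
  (hE : ∀ t, 0 ≤ t → ∀ f : ℝ → X, MemC00 f → ∀ τ, ‖evolSG U t f τ‖ ≤ K t * ⨆ σ, ‖f σ‖)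
include hE

lemma norm_apply_le_of_norm_evolSG_le {t τ : ℝ} (hτ : 0 < τ) (hτt : τ ≤ t) (x : X) :
    ‖U t τ x‖ ≤ K (t - τ) * ‖x‖ := by
  obtain ⟨f, hf, hfτ, hsup⟩ := exists_memC00_apply_eq hτ x
  have hval : evolSG U (t - τ) f t = U t τ x := by
    simp [evolSG, hτ.le, hfτ]
  simpa [hval, hsup] using hE (t - τ) (sub_nonneg.2 hτt) f hf t

lemma norm_le_of_norm_evolSG_le
    (hcont : ∀ x : X, Continuous fun q : ℝ × ℝ => U q.1 q.2 x)
    {t τ : ℝ} (hτ : 0 ≤ τ) (hτt : τ ≤ t) (hK : 0 ≤ K (t - τ)) :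
    ‖U t τ‖ ≤ K (t - τ) := by
  refine (U t τ).opNorm_le_bound hK fun x => ?_
  have hshift : Tendsto (fun ε : ℝ => ‖U (t + ε) (τ + ε) x‖) (𝓝[>] 0) (𝓝 ‖U t τ x‖) := by
    have : Continuous fun ε : ℝ => ‖U (t + ε) (τ + ε) x‖ := by
      have := hcont x
      fun_prop
    simpa using this.continuousWithinAt.tendsto (x := 0) (s := Set.Ioi 0)
  refine le_of_tendsto hshift (eventually_nhdsWithin_of_forall fun ε (hε : 0 < ε) => ?_)
  simpa only [add_sub_add_right_eq_sub] using
    norm_apply_le_of_norm_evolSG_le hE (t := t + ε) (add_pos_of_nonneg_of_pos hτ hε) (by linarith) x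

end EvolutionSemigroup

theorem stmt_19_general {X : Type*} [NormedAddCommGroup X] [NormedSpace ℂ X]
    (U : ℝ → ℝ → X →L[ℂ] X)
    (hcont : ∀ x : X, Continuous fun q : ℝ × ℝ => U q.1 q.2 x)
    (M : ℝ) (hM : 1 ≤ M) :
    (∀ α : ℝ, 0 < α →
      (∀ t : ℝ, 0 ≤ t → ∀ f : ℝ → X, MemC00 f → ∀ τ : ℝ,
        ‖evolSG U t f τ‖ ≤ M * Real.exp (-α * t) * ⨆ σ : ℝ, ‖f σ‖) →
      ∀ t τ : ℝ, 0 ≤ τ → τ ≤ t → ‖U t τ‖ ≤ M * Real.exp (-α * (t - τ))) ∧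
    (∀ β : ℝ, 0 < β →
      (∀ t τ : ℝ, 0 ≤ τ → τ ≤ t → ‖U t τ‖ ≤ M * Real.exp (-β * (t - τ))) →
      ∀ t : ℝ, 0 ≤ t → ∀ f : ℝ → X, MemC00 f → ∀ τ : ℝ,
        ‖evolSG U t f τ‖ ≤ M * Real.exp (-β * t) * ⨆ σ : ℝ, ‖f σ‖) := by
  constructor
  · intro α _ hE t τ hτ hτt
    exact norm_le_of_norm_evolSG_le (K := fun s => M * Real.exp (-α * s)) hE hcont hτ hτt
      (by positivity)
  · intro β _ hU t ht f hf τ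
    refine norm_evolSG_le (fun σ htσ => ?_) hf.bddAbove_norm τ
    simpa using hU σ (σ - t) (by linarith) (by linarith)

theorem stmt_19 {X : Type*} [NormedAddCommGroup X] [NormedSpace ℂ X] [CompleteSpace X]
    (U : ℝ → ℝ → X →L[ℂ] X)
    (hcoc : ∀ τ s t : ℝ, 0 ≤ τ → τ ≤ s → s ≤ t → U t τ = (U t s).comp (U s τ))
    (hid : ∀ t : ℝ, U t t = 1)
    (hcont : ∀ x : X, Continuous fun q : ℝ × ℝ => U q.1 q.2 x)
    (hexp : ∃ Mb ω : ℝ, 1 ≤ Mb ∧ ∀ t τ : ℝ, 0 ≤ τ → τ ≤ t →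
      ‖U t τ‖ ≤ Mb * Real.exp (ω * (t - τ)))
    (M : ℝ) (hM : 1 ≤ M) :
    (∀ α : ℝ, 0 < α →
      (∀ t : ℝ, 0 ≤ t → ∀ f : ℝ → X, MemC00 f → ∀ τ : ℝ,
        ‖evolSG U t f τ‖ ≤ M * Real.exp (-α * t) * ⨆ σ : ℝ, ‖f σ‖) →
      ∀ t τ : ℝ, 0 ≤ τ → τ ≤ t → ‖U t τ‖ ≤ M * Real.exp (-α * (t - τ))) ∧
    (∀ β : ℝ, 0 < β →
      (∀ t τ : ℝ, 0 ≤ τ → τ ≤ t → ‖U t τ‖ ≤ M * Real.exp (-β * (t - τ))) →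
      ∀ t : ℝ, 0 ≤ t → ∀ f : ℝ → X, MemC00 f → ∀ τ : ℝ,
        ‖evolSG U t f τ‖ ≤ M * Real.exp (-β * t) * ⨆ σ : ℝ, ‖f σ‖) :=
  stmt_19_general U hcont M hM
end
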